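/- arXiv:2310.10545 — 3 statements merged into one kernel-verified Lean document; each statement's English description precedes it below -/
import Mathlib

section
/- Let f(x) = x^3 - α x + β with α > 0 and 4|β| ≤ α^{3/2}. Then every real root x of f(x) = 0 satisfies |x| ≤ 2|β|/α, or |x - √α| ≤ 2|β|/α, or |x + √α| ≤ 2|β|/α. -/
/-!
With `s = √α` the root condition reads `x (x - s) (x + s) = -β`, so the distances from `x` to
`0`, `s` and `-s` multiply to `|β|`. The two distances other than the smallest one multiply to
at least `3α / 4`: for `0 ≤ x ≤ s / 2` they give `α - x²`, for `x ≥ s / 2` they give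
`x (x + s) ≥ (s / 2) (3s / 2)`, and `x ↦ -x` swaps `s` and `-s`. Hence the smallest distance is
at most `4|β| / (3α)`.
-/

section

variable {s x : ℝ}

lemma abs_mul_sq_le_two_mul_abs_cubic_of_le_half (hx : 0 ≤ x) (hxs : x ≤ s / 2) :
    |x| * s ^ 2 ≤ 2 * |x ^ 3 - s ^ 2 * x| := by
  have hsq : 4 * x ^ 2 ≤ s ^ 2 := by nlinarith
  rw [show x ^ 3 - s ^ 2 * x = -(x * (s ^ 2 - x ^ 2)) by ring, abs_neg, abs_of_nonneg hx,
    abs_of_nonneg (mul_nonneg hx (by nlinarith))]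
  nlinarith [mul_le_mul_of_nonneg_left hsq hx]

lemma abs_sub_mul_sq_le_two_mul_abs_cubic_of_half_le (hs : 0 ≤ s) (hxs : s / 2 ≤ x) :
    |x - s| * s ^ 2 ≤ 2 * |x ^ 3 - s ^ 2 * x| := by
  have hprod : 3 * s ^ 2 / 4 ≤ x * (x + s) := by nlinarith
  rw [show x ^ 3 - s ^ 2 * x = (x - s) * (x * (x + s)) by ring, abs_mul,
    abs_of_nonneg (by nlinarith : 0 ≤ x * (x + s))]
  nlinarith [abs_nonneg (x - s)]

lemma min_abs_sub_mul_sq_le_two_mul_abs_cubic_of_nonneg (hs : 0 ≤ s) (hx : 0 ≤ x) :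
    min |x| (min |x - s| |x + s|) * s ^ 2 ≤ 2 * |x ^ 3 - s ^ 2 * x| := by
  rcases le_total x (s / 2) with hxs | hxs
  · exact (mul_le_mul_of_nonneg_right (min_le_left _ _) (sq_nonneg s)).trans
      (abs_mul_sq_le_two_mul_abs_cubic_of_le_half hx hxs)
  · exact (mul_le_mul_of_nonneg_right ((min_le_right _ _).trans (min_le_left _ _))
      (sq_nonneg s)).trans (abs_sub_mul_sq_le_two_mul_abs_cubic_of_half_le hs hxs)

lemma min_abs_sub_mul_sq_le_two_mul_abs_cubic (hs : 0 ≤ s) (x : ℝ) :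
    min |x| (min |x - s| |x + s|) * s ^ 2 ≤ 2 * |x ^ 3 - s ^ 2 * x| := by
  rcases le_total 0 x with hx | hx
  · exact min_abs_sub_mul_sq_le_two_mul_abs_cubic_of_nonneg hs hx
  · have h := min_abs_sub_mul_sq_le_two_mul_abs_cubic_of_nonneg hs (neg_nonneg.mpr hx)
    rwa [abs_neg, show -x - s = -(x + s) by ring, show -x + s = -(x - s) by ring, abs_neg,
      abs_neg, min_comm |x + s|, show (-x) ^ 3 - s ^ 2 * -x = -(x ^ 3 - s ^ 2 * x) by ring,
      abs_neg] at h

end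

theorem stmt_0_general (α β x : ℝ) (hα : 0 < α)
    (hroot : x ^ 3 - α * x + β = 0) :
    |x| ≤ 2 * |β| / α ∨ |x - Real.sqrt α| ≤ 2 * |β| / α ∨
      |x + Real.sqrt α| ≤ 2 * |β| / α := by
  have h := min_abs_sub_mul_sq_le_two_mul_abs_cubic (Real.sqrt_nonneg α) x
  rw [Real.sq_sqrt hα.le, show x ^ 3 - α * x = -β by linarith, abs_neg,
    ← le_div_iff₀ hα] at h
  simpa only [min_le_iff] using h

/-- Roots of the cubic `x^3 - α x + β` with `α > 0` and `4|β| ≤ α^{3/2}`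
lie near `0`, `√α` or `-√α`. -/
theorem stmt_0 (α β x : ℝ) (hα : 0 < α) (hβ : 4 * |β| ≤ α ^ ((3 : ℝ) / 2))
    (hroot : x ^ 3 - α * x + β = 0) :
    |x| ≤ 2 * |β| / α ∨ |x - Real.sqrt α| ≤ 2 * |β| / α ∨
      |x + Real.sqrt α| ≤ 2 * |β| / α :=
  stmt_0_general α β x hα hroot
end

section
/- Let Z ∈ ℝ^r have independent entries with mean zero, E[Z_j²] = 1 and E[Z_j⁴] = 3(κ+1) for all j, and let A ∈ O(r). Then for any fixed matrix M ∈ ℝ^{r×r}, with Y = A Z, E[Y^T M Y · Y Y^T] = 3κ Σ_{i=1}^r (A_i^T M A_i) A_i A_i^T + tr(M) I_r + M + M^T. -/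
open Matrix MeasureTheory ProbabilityTheory

lemma fact_prod {r : ℕ} {Ω : Type*} [MeasurableSpace Ω] (μ : Measure Ω)
    [IsProbabilityMeasure μ] (W : Fin r → Ω → ℝ)
    (hmeas : ∀ j, Measurable (W j))
    (hindep : iIndepFun W μ)
    (s : Finset (Fin r)) :
    ∫ ω, ∏ t ∈ s, W t ω ∂μ = ∏ t ∈ s, ∫ ω, W t ω ∂μ := by
  classical
  induction s using Finset.induction_on with
  | empty => simp
  | @insert i s hi ih =>
    have hI : IndepFun (∏ j ∈ s, W j) (W i) μ :=
      hindep.indepFun_finsetProd_of_notMem hmeas hi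
    have hPm : AEStronglyMeasurable (∏ j ∈ s, W j) μ := by
      have : Measurable (∏ j ∈ s, W j) := by
        rw [show (∏ j ∈ s, W j) = fun ω => ∏ j ∈ s, W j ω by
          funext ω; simp [Finset.prod_apply]]
        exact Finset.measurable_prod s (fun j _ => hmeas j)
      exact this.aestronglyMeasurable
    have key := hI.symm.integral_mul_eq_mul_integral (hmeas i).aestronglyMeasurable hPm
    have heq : (∫ ω, ∏ t ∈ insert i s, W t ω ∂μ)
        = (∫ ω, W i ω ∂μ) * ∫ ω, ∏ t ∈ s, W t ω ∂μ := by
      have h1 : (fun ω => ∏ t ∈ insert i s, W t ω) = (W i * ∏ j ∈ s, W j) := by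
        funext ω; simp [Finset.prod_insert hi, Finset.prod_apply]
      have h2 : (fun ω => ∏ t ∈ s, W t ω) = (∏ j ∈ s, W j : Ω → ℝ) := by
        funext ω; simp [Finset.prod_apply]
      rw [show (∫ ω, ∏ t ∈ insert i s, W t ω ∂μ) = integral μ (W i * ∏ j ∈ s, W j) by rw [← h1],
        key, show (∫ ω, ∏ t ∈ s, W t ω ∂μ) = integral μ (∏ j ∈ s, W j) by rw [← h2]]
    rw [heq, ih, Finset.prod_insert hi]

lemma mom4 {r : ℕ} {Ω : Type*} [MeasurableSpace Ω] (μ : Measure Ω)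
    [IsProbabilityMeasure μ] (κ : ℝ) (Z : Fin r → Ω → ℝ)
    (hmeas : ∀ j, Measurable (Z j))
    (hindep : iIndepFun Z μ)
    (hmean : ∀ j, ∫ ω, Z j ω ∂μ = 0)
    (hvar : ∀ j, ∫ ω, Z j ω ^ 2 ∂μ = 1)
    (hfour : ∀ j, ∫ ω, Z j ω ^ 4 ∂μ = 3 * (κ + 1))
    (i j p q : Fin r) :
    ∫ ω, Z i ω * Z j ω * Z p ω * Z q ω ∂μ
      = 3 * κ * ((if i = j then (1:ℝ) else 0) * (if j = p then (1:ℝ) else 0)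
          * (if p = q then (1:ℝ) else 0))
        + (if i = j then (1:ℝ) else 0) * (if p = q then (1:ℝ) else 0)
        + (if i = p then (1:ℝ) else 0) * (if j = q then (1:ℝ) else 0)
        + (if i = q then (1:ℝ) else 0) * (if j = p then (1:ℝ) else 0) := by
  classical
  set c : Fin r → ℕ := fun t =>
    (if t = i then 1 else 0) + (if t = j then 1 else 0)
    + (if t = p then 1 else 0) + (if t = q then 1 else 0) with hc
  have key : ∀ ω, Z i ω * Z j ω * Z p ω * Z q ω = ∏ t, Z t ω ^ c t := by
    intro ω
    simp only [hc, pow_add, Finset.prod_mul_distrib, pow_ite, pow_one, pow_zero,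
      Finset.prod_ite_eq', Finset.mem_univ, if_true]
  have hfacteq : ∫ ω, Z i ω * Z j ω * Z p ω * Z q ω ∂μ
      = ∏ t, ∫ ω, Z t ω ^ c t ∂μ := by
    rw [show (fun ω => Z i ω * Z j ω * Z p ω * Z q ω)
        = fun ω => ∏ t, Z t ω ^ c t by funext ω; exact key ω]
    exact fact_prod μ (fun t ω => Z t ω ^ c t)
      (fun t => (hmeas t).pow_const _)
      (hindep.comp (fun t x => x ^ c t) (fun t => measurable_id.pow_const _))
      Finset.univ
  rw [hfacteq]
  have h0 : ∀ t, c t = 0 → ∫ ω, Z t ω ^ c t ∂μ = 1 := by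
    intro t ht; rw [ht]; simp
  have h1 : ∀ t, c t = 1 → ∫ ω, Z t ω ^ c t ∂μ = 0 := by
    intro t ht; rw [ht]; simpa using hmean t
  have h2 : ∀ t, c t = 2 → ∫ ω, Z t ω ^ c t ∂μ = 1 := by
    intro t ht; rw [ht]; exact hvar t
  have h4 : ∀ t, c t = 4 → ∫ ω, Z t ω ^ c t ∂μ = 3 * (κ + 1) := by
    intro t ht; rw [ht]; exact hfour t
  by_cases hij : i = j
  · subst hij
    by_cases hip : i = p
    · subst hip
      by_cases hiq : i = q
      · subst hiq
        have : ∀ t, ∫ ω, Z t ω ^ c t ∂μ = if t = i then 3 * (κ + 1) else 1 := by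
          intro t
          by_cases ht : t = i
          · subst ht; rw [if_pos rfl]; exact h4 t (by simp [hc])
          · rw [if_neg ht]; exact h0 t (by simp [hc, ht])
        rw [Finset.prod_congr rfl (fun t _ => this t), Finset.prod_ite_eq',
          if_pos (Finset.mem_univ i)]
        simp; ring
      · rw [Finset.prod_eq_zero (Finset.mem_univ q)
          (h1 q (by simp [hc, Ne.symm hiq]))]
        simp [hiq]
    · by_cases hiq : i = q
      · subst hiq
        rw [Finset.prod_eq_zero (Finset.mem_univ p)
          (h1 p (by simp [hc, Ne.symm hip]))]
        simp [hip, Ne.symm hip]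
      · by_cases hpq : p = q
        · subst hpq
          have : ∀ t, ∫ ω, Z t ω ^ c t ∂μ = 1 := by
            intro t
            by_cases hti : t = i
            · subst hti; exact h2 t (by simp [hc, hip])
            · by_cases htp : t = p
              · subst htp; exact h2 t (by simp [hc, Ne.symm hip])
              · exact h0 t (by simp [hc, hti, htp])
          rw [Finset.prod_congr rfl (fun t _ => this t)]
          simp [hip]
        · rw [Finset.prod_eq_zero (Finset.mem_univ p)
            (h1 p (by simp [hc, Ne.symm hip, hpq]))]
          simp [hip, hpq]
  · by_cases hip : i = p
    · subst hip
      by_cases hjq : j = q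
      · subst hjq
        have : ∀ t, ∫ ω, Z t ω ^ c t ∂μ = 1 := by
          intro t
          by_cases hti : t = i
          · subst hti; exact h2 t (by simp [hc, fun h => hij h])
          · by_cases htj : t = j
            · subst htj; exact h2 t (by simp [hc, Ne.symm hij])
            · exact h0 t (by simp [hc, hti, htj])
        rw [Finset.prod_congr rfl (fun t _ => this t)]
        simp [hij, Ne.symm hij]
      · rw [Finset.prod_eq_zero (Finset.mem_univ j)
          (h1 j (by simp [hc, Ne.symm hij, hjq]))]
        simp [hij, Ne.symm hij, hjq]
    · by_cases hiq : i = q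
      · subst hiq
        by_cases hjp : j = p
        · subst hjp
          have : ∀ t, ∫ ω, Z t ω ^ c t ∂μ = 1 := by
            intro t
            by_cases hti : t = i
            · subst hti; exact h2 t (by simp [hc, fun h => hij h])
            · by_cases htj : t = j
              · subst htj; exact h2 t (by simp [hc, Ne.symm hij])
              · exact h0 t (by simp [hc, hti, htj])
          rw [Finset.prod_congr rfl (fun t _ => this t)]
          simp [hij, Ne.symm hij, hip]
        · rw [Finset.prod_eq_zero (Finset.mem_univ j)
            (h1 j (by simp [hc, Ne.symm hij, hjp]))]
          simp [hij, Ne.symm hij, hip, hjp]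
      · rw [Finset.prod_eq_zero (Finset.mem_univ i)
          (h1 i (by simp [hc, hij, hip, hiq]))]
        simp [hij, Ne.symm hij, hip, hiq]

lemma rev4 {r : ℕ} (f : Fin r → Fin r → Fin r → Fin r → ℝ) :
    ∑ a, ∑ b, ∑ c, ∑ d, f a b c d = ∑ d, ∑ c, ∑ b, ∑ a, f a b c d :=
  calc ∑ a, ∑ b, ∑ c, ∑ d, f a b c d
      = ∑ a, ∑ b, ∑ d, ∑ c, f a b c d :=
        Finset.sum_congr rfl fun a _ => Finset.sum_congr rfl fun b _ => Finset.sum_comm ..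
    _ = ∑ a, ∑ d, ∑ b, ∑ c, f a b c d :=
        Finset.sum_congr rfl fun a _ => Finset.sum_comm ..
    _ = ∑ d, ∑ a, ∑ b, ∑ c, f a b c d := Finset.sum_comm ..
    _ = ∑ d, ∑ b, ∑ a, ∑ c, f a b c d :=
        Finset.sum_congr rfl fun d _ => Finset.sum_comm ..
    _ = ∑ d, ∑ b, ∑ c, ∑ a, f a b c d :=
        Finset.sum_congr rfl fun d _ => Finset.sum_congr rfl fun b _ => Finset.sum_comm ..
    _ = ∑ d, ∑ c, ∑ b, ∑ a, f a b c d :=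
        Finset.sum_congr rfl fun d _ => Finset.sum_comm ..

lemma E4_lemma {r : ℕ} {Ω : Type*} [MeasurableSpace Ω] (μ : Measure Ω)
    [IsProbabilityMeasure μ] (κ : ℝ) (Z : Fin r → Ω → ℝ)
    (hmeas : ∀ j, Measurable (Z j))
    (hindep : iIndepFun Z μ)
    (hL4 : ∀ j, MemLp (Z j) 4 μ)
    (hmean : ∀ j, ∫ ω, Z j ω ∂μ = 0)
    (hvar : ∀ j, ∫ ω, Z j ω ^ 2 ∂μ = 1)
    (hfour : ∀ j, ∫ ω, Z j ω ^ 4 ∂μ = 3 * (κ + 1))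
    (A : Matrix (Fin r) (Fin r) ℝ)
    (horth : ∀ a b, ∑ x, A a x * A b x = if a = b then (1:ℝ) else 0)
    (k l a b : Fin r) :
    ∫ ω, (∑ i, A a i * Z i ω) * (∑ j, A b j * Z j ω)
        * ((∑ p, A k p * Z p ω) * (∑ q, A l q * Z q ω)) ∂μ
      = 3 * κ * (∑ i, A a i * A b i * (A k i * A l i))
        + (if a = b then (1:ℝ) else 0) * (if k = l then (1:ℝ) else 0)
        + (if a = k then (1:ℝ) else 0) * (if b = l then (1:ℝ) else 0)
        + (if a = l then (1:ℝ) else 0) * (if b = k then (1:ℝ) else 0) := by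
  classical
  have hL2 : ∀ i j, MemLp (fun ω => Z i ω * Z j ω) 2 μ := by
    intro i j
    haveI : ENNReal.HolderTriple 4 4 2 := ⟨by
      rw [show (4:ENNReal) = 2*2 by norm_num, ENNReal.mul_inv (by simp) (by simp), ← mul_add,
        ENNReal.inv_two_add_inv_two, mul_one]⟩
    have := (hL4 j).smul (hL4 i) (p := 4) (q := 4) (r := 2)
    exact this
  have hL1 : ∀ i j p q, Integrable (fun ω => Z i ω * Z j ω * Z p ω * Z q ω) μ := by
    intro i j p q
    haveI : ENNReal.HolderTriple 2 2 1 := ⟨by rw [ENNReal.inv_two_add_inv_two, inv_one]⟩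
    have := (hL2 p q).smul (hL2 i j) (p := 2) (q := 2) (r := 1)
    have h := memLp_one_iff_integrable.mp this
    refine h.congr ?_
    filter_upwards with ω
    simp [smul_eq_mul]; ring
  have hpt : ∀ ω, (∑ i, A a i * Z i ω) * (∑ j, A b j * Z j ω)
      * ((∑ p, A k p * Z p ω) * (∑ q, A l q * Z q ω))
      = ∑ i, ∑ j, ∑ p, ∑ q, (A a i * A b j * (A k p * A l q))
          * (Z i ω * Z j ω * Z p ω * Z q ω) := by
    intro ω
    simp only [Finset.sum_mul, Finset.mul_sum]
    rw [rev4]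
    refine Finset.sum_congr rfl fun i _ => Finset.sum_congr rfl fun j _ =>
      Finset.sum_congr rfl fun p _ => Finset.sum_congr rfl fun q _ => by ring
  rw [show (fun ω => (∑ i, A a i * Z i ω) * (∑ j, A b j * Z j ω)
      * ((∑ p, A k p * Z p ω) * (∑ q, A l q * Z q ω)))
      = fun ω => ∑ i, ∑ j, ∑ p, ∑ q, (A a i * A b j * (A k p * A l q))
          * (Z i ω * Z j ω * Z p ω * Z q ω) from funext hpt]
  rw [integral_finset_sum _ fun i _ => integrable_finset_sum _ fun j _ =>
    integrable_finset_sum _ fun p _ => integrable_finset_sum _ fun q _ =>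
      (hL1 i j p q).const_mul _]
  have hswap : ∀ i, (∫ ω, ∑ j, ∑ p, ∑ q, (A a i * A b j * (A k p * A l q))
      * (Z i ω * Z j ω * Z p ω * Z q ω) ∂μ)
      = ∑ j, ∑ p, ∑ q, (A a i * A b j * (A k p * A l q))
          * ∫ ω, Z i ω * Z j ω * Z p ω * Z q ω ∂μ := by
    intro i
    rw [integral_finset_sum _ fun j _ => integrable_finset_sum _ fun p _ =>
      integrable_finset_sum _ fun q _ => (hL1 i j p q).const_mul _]
    refine Finset.sum_congr rfl fun j _ => ?_
    rw [integral_finset_sum _ fun p _ => integrable_finset_sum _ fun q _ =>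
      (hL1 i j p q).const_mul _]
    refine Finset.sum_congr rfl fun p _ => ?_
    rw [integral_finset_sum _ fun q _ => (hL1 i j p q).const_mul _]
    exact Finset.sum_congr rfl fun q _ => integral_const_mul _ _
  rw [Finset.sum_congr rfl fun i _ => hswap i]
  have hm := mom4 μ κ Z hmeas hindep hmean hvar hfour
  simp only [hm]
  simp only [mul_add, Finset.sum_add_distrib]
  have T1 : ∑ i, ∑ j, ∑ p, ∑ q, (A a i * A b j * (A k p * A l q))
      * (3 * κ * ((if i = j then (1:ℝ) else 0) * (if j = p then (1:ℝ) else 0)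
          * (if p = q then (1:ℝ) else 0)))
      = 3 * κ * ∑ i, A a i * A b i * (A k i * A l i) := by
    simp only [mul_ite, ite_mul, mul_one, mul_zero, one_mul, zero_mul,
      Finset.sum_ite_eq, Finset.sum_ite_eq', Finset.mem_univ, if_true, mul_zero,
      Finset.sum_const_zero, Finset.mul_sum]
    refine Finset.sum_congr rfl fun i _ => by ring
  have T2 : ∑ i, ∑ j, ∑ p, ∑ q, (A a i * A b j * (A k p * A l q))
      * ((if i = j then (1:ℝ) else 0) * (if p = q then (1:ℝ) else 0))
      = (if a = b then (1:ℝ) else 0) * (if k = l then (1:ℝ) else 0) := by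
    rw [← horth a b, ← horth k l, Finset.sum_mul_sum]
    simp only [mul_ite, ite_mul, mul_one, mul_zero, one_mul, zero_mul,
      Finset.sum_ite_eq, Finset.sum_ite_eq', Finset.mem_univ, if_true]
    rw [show ∀ (g : Fin r → Fin r → Fin r → ℝ),
        ∑ i, ∑ j, ∑ p, g i j p = ∑ i, ∑ p, ∑ j, g i j p from
      fun g => Finset.sum_congr rfl fun i _ => Finset.sum_comm ..]
    simp only [Finset.sum_ite_eq, Finset.sum_ite_eq', Finset.mem_univ, if_true]
  have T3 : ∑ i, ∑ j, ∑ p, ∑ q, (A a i * A b j * (A k p * A l q))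
      * ((if i = p then (1:ℝ) else 0) * (if j = q then (1:ℝ) else 0))
      = (if a = k then (1:ℝ) else 0) * (if b = l then (1:ℝ) else 0) := by
    rw [← horth a k, ← horth b l, Finset.sum_mul_sum]
    simp only [mul_ite, ite_mul, mul_one, mul_zero, one_mul, zero_mul,
      Finset.sum_ite_eq, Finset.sum_ite_eq', Finset.mem_univ, if_true]
    refine Finset.sum_congr rfl fun i _ => Finset.sum_congr rfl fun j _ => by ring
  have T4 : ∑ i, ∑ j, ∑ p, ∑ q, (A a i * A b j * (A k p * A l q))
      * ((if i = q then (1:ℝ) else 0) * (if j = p then (1:ℝ) else 0))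
      = (if a = l then (1:ℝ) else 0) * (if b = k then (1:ℝ) else 0) := by
    rw [← horth a l, ← horth b k, Finset.sum_mul_sum]
    rw [show ∀ (g : Fin r → Fin r → Fin r → Fin r → ℝ),
        ∑ i, ∑ j, ∑ p, ∑ q, g i j p q = ∑ i, ∑ j, ∑ q, ∑ p, g i j p q from
      fun g => Finset.sum_congr rfl fun i _ => Finset.sum_congr rfl fun j _ =>
        Finset.sum_comm ..]
    simp only [mul_ite, ite_mul, mul_one, mul_zero, one_mul, zero_mul,
      Finset.sum_ite_eq, Finset.sum_ite_eq', Finset.mem_univ, if_true]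
    refine Finset.sum_congr rfl fun i _ => Finset.sum_congr rfl fun j _ => by ring
  rw [T1, T2, T3, T4]

/-- Fourth-moment identity: if `Z` has independent entries with mean zero,
unit variance and fourth moment `3(κ+1)`, `A` is orthogonal and `Y = AZ`, then
`E[Yᵀ M Y · Y Yᵀ] = 3κ Σ_i (A_iᵀ M A_i) A_i A_iᵀ + tr(M) I + M + Mᵀ`
(entrywise). -/
theorem stmt_7 {r : ℕ} {Ω : Type*} [MeasurableSpace Ω] (μ : Measure Ω)
    [IsProbabilityMeasure μ] (κ : ℝ) (Z : Fin r → Ω → ℝ)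
    (hmeas : ∀ j, Measurable (Z j))
    (hindep : iIndepFun Z μ)
    (hL4 : ∀ j, MemLp (Z j) 4 μ)
    (hmean : ∀ j, ∫ ω, Z j ω ∂μ = 0)
    (hvar : ∀ j, ∫ ω, Z j ω ^ 2 ∂μ = 1)
    (hfour : ∀ j, ∫ ω, Z j ω ^ 4 ∂μ = 3 * (κ + 1))
    (A : Matrix (Fin r) (Fin r) ℝ) (hA : Aᵀ * A = 1) (hA' : A * Aᵀ = 1)
    (M : Matrix (Fin r) (Fin r) ℝ) (k l : Fin r) :
    ∫ ω, ((A.mulVec fun j => Z j ω) ⬝ᵥ M.mulVec (A.mulVec fun j => Z j ω))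
        * ((A.mulVec fun j => Z j ω) k * (A.mulVec fun j => Z j ω) l) ∂μ
      = 3 * κ * ∑ i, ((fun s => A s i) ⬝ᵥ M.mulVec fun s => A s i) * (A k i * A l i)
        + M.trace * (if k = l then 1 else 0) + M k l + M l k := by
  classical
  have horth : ∀ a b, ∑ x, A a x * A b x = if a = b then (1:ℝ) else 0 := by
    intro a b
    have := congrArg (fun N => N a b) hA'
    simpa [Matrix.mul_apply, Matrix.transpose_apply, Matrix.one_apply] using this
  have hL2 : ∀ i j, MemLp (fun ω => Z i ω * Z j ω) 2 μ := by
    intro i j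
    haveI : ENNReal.HolderTriple 4 4 2 := ⟨by
      rw [show (4:ENNReal) = 2*2 by norm_num, ENNReal.mul_inv (by simp) (by simp), ← mul_add,
        ENNReal.inv_two_add_inv_two, mul_one]⟩
    have := (hL4 j).smul (hL4 i) (p := 4) (q := 4) (r := 2)
    exact this
  have hL1 : ∀ i j p q, Integrable (fun ω => Z i ω * Z j ω * Z p ω * Z q ω) μ := by
    intro i j p q
    haveI : ENNReal.HolderTriple 2 2 1 := ⟨by rw [ENNReal.inv_two_add_inv_two, inv_one]⟩
    have := (hL2 p q).smul (hL2 i j) (p := 2) (q := 2) (r := 1)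
    have h := memLp_one_iff_integrable.mp this
    refine h.congr ?_
    filter_upwards with ω
    simp [smul_eq_mul]; ring
  -- pointwise rewrite of the integrand
  have hpt0 : ∀ ω, ((A.mulVec fun j => Z j ω) ⬝ᵥ M.mulVec (A.mulVec fun j => Z j ω))
      * ((A.mulVec fun j => Z j ω) k * (A.mulVec fun j => Z j ω) l)
      = ∑ a, ∑ b, M a b * ((∑ i, A a i * Z i ω) * (∑ j, A b j * Z j ω)
          * ((∑ p, A k p * Z p ω) * (∑ q, A l q * Z q ω))) := by
    intro ω
    simp only [dotProduct, mulVec]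
    rw [Finset.sum_mul]
    refine Finset.sum_congr rfl fun a _ => ?_
    rw [Finset.mul_sum, Finset.sum_mul]
    refine Finset.sum_congr rfl fun b _ => ?_
    ring
  have hptE : ∀ a b, ∀ ω, (∑ i, A a i * Z i ω) * (∑ j, A b j * Z j ω)
      * ((∑ p, A k p * Z p ω) * (∑ q, A l q * Z q ω))
      = ∑ i, ∑ j, ∑ p, ∑ q, (A a i * A b j * (A k p * A l q))
          * (Z i ω * Z j ω * Z p ω * Z q ω) := by
    intro a b ω
    simp only [Finset.sum_mul, Finset.mul_sum]
    rw [rev4]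
    refine Finset.sum_congr rfl fun i _ => Finset.sum_congr rfl fun j _ =>
      Finset.sum_congr rfl fun p _ => Finset.sum_congr rfl fun q _ => by ring
  have hIntE : ∀ a b, Integrable (fun ω => (∑ i, A a i * Z i ω) * (∑ j, A b j * Z j ω)
      * ((∑ p, A k p * Z p ω) * (∑ q, A l q * Z q ω))) μ := by
    intro a b
    rw [show (fun ω => (∑ i, A a i * Z i ω) * (∑ j, A b j * Z j ω)
        * ((∑ p, A k p * Z p ω) * (∑ q, A l q * Z q ω)))
        = fun ω => ∑ i, ∑ j, ∑ p, ∑ q, (A a i * A b j * (A k p * A l q))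
            * (Z i ω * Z j ω * Z p ω * Z q ω) from funext (hptE a b)]
    exact integrable_finset_sum _ fun i _ => integrable_finset_sum _ fun j _ =>
      integrable_finset_sum _ fun p _ => integrable_finset_sum _ fun q _ =>
        (hL1 i j p q).const_mul _
  rw [show (fun ω => ((A.mulVec fun j => Z j ω) ⬝ᵥ M.mulVec (A.mulVec fun j => Z j ω))
      * ((A.mulVec fun j => Z j ω) k * (A.mulVec fun j => Z j ω) l))
      = fun ω => ∑ a, ∑ b, M a b * ((∑ i, A a i * Z i ω) * (∑ j, A b j * Z j ω)
          * ((∑ p, A k p * Z p ω) * (∑ q, A l q * Z q ω))) from funext hpt0]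
  rw [integral_finset_sum _ fun a _ => integrable_finset_sum _ fun b _ =>
    (hIntE a b).const_mul (M a b)]
  have hswap : ∀ a, (∫ ω, ∑ b, M a b * ((∑ i, A a i * Z i ω) * (∑ j, A b j * Z j ω)
      * ((∑ p, A k p * Z p ω) * (∑ q, A l q * Z q ω))) ∂μ)
      = ∑ b, M a b * ∫ ω, (∑ i, A a i * Z i ω) * (∑ j, A b j * Z j ω)
          * ((∑ p, A k p * Z p ω) * (∑ q, A l q * Z q ω)) ∂μ := by
    intro a
    rw [integral_finset_sum _ fun b _ => (hIntE a b).const_mul (M a b)]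
    exact Finset.sum_congr rfl fun b _ => integral_const_mul _ _
  rw [Finset.sum_congr rfl fun a _ => hswap a]
  have hE4 := E4_lemma μ κ Z hmeas hindep hL4 hmean hvar hfour A horth k l
  simp only [hE4]
  -- final algebra
  simp only [mul_add, Finset.sum_add_distrib]
  have TA : ∑ a, ∑ b, M a b * (3 * κ * ∑ i, A a i * A b i * (A k i * A l i))
      = 3 * κ * ∑ i, ((fun s => A s i) ⬝ᵥ M.mulVec fun s => A s i) * (A k i * A l i) := by
    simp only [dotProduct, mulVec, Finset.mul_sum]
    rw [show ∀ (g : Fin r → Fin r → Fin r → ℝ),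
        ∑ a, ∑ b, ∑ i, g a b i = ∑ i, ∑ a, ∑ b, g a b i from
      fun g => by
        rw [show ∑ a, ∑ b, ∑ i, g a b i = ∑ a, ∑ i, ∑ b, g a b i from
          Finset.sum_congr rfl fun a _ => Finset.sum_comm ..]
        exact Finset.sum_comm ..]
    refine Finset.sum_congr rfl fun i _ => ?_
    simp only [Finset.mul_sum, Finset.sum_mul]
    refine Finset.sum_congr rfl fun a _ =>
      Finset.sum_congr rfl fun b _ => by ring
  have TB : ∑ a, ∑ b, M a b * ((if a = b then (1:ℝ) else 0) * (if k = l then (1:ℝ) else 0))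
      = M.trace * (if k = l then 1 else 0) := by
    simp only [mul_ite, ite_mul, mul_one, mul_zero, one_mul, zero_mul,
      Finset.sum_ite_eq, Finset.sum_ite_eq', Finset.mem_univ, if_true,
      Finset.sum_const_zero]
    simp [Matrix.trace, Matrix.diag, Finset.sum_ite_eq, Finset.sum_apply]
  have TC : ∑ a, ∑ b, M a b * ((if a = k then (1:ℝ) else 0) * (if b = l then (1:ℝ) else 0))
      = M k l := by
    simp only [mul_ite, ite_mul, mul_one, mul_zero, one_mul, zero_mul,
      Finset.sum_ite_eq, Finset.sum_ite_eq', Finset.mem_univ, if_true,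
      Finset.sum_const_zero]
  have TD : ∑ a, ∑ b, M a b * ((if a = l then (1:ℝ) else 0) * (if b = k then (1:ℝ) else 0))
      = M l k := by
    simp only [mul_ite, ite_mul, mul_one, mul_zero, one_mul, zero_mul,
      Finset.sum_ite_eq, Finset.sum_ite_eq', Finset.mem_univ, if_true,
      Finset.sum_const_zero]
  rw [TA, TB, TC, TD]
end

section
/- Let Z and N be independent random vectors in ℝ^r, where Z has independent entries with mean zero, variance 1 and fourth moment 3(κ+1), A ∈ O(r), and N ~ N(0, Σ_N). Then with Y = AZ + N and Σ_Y = I + Σ_N, for any unit vector q: E[(q^T Y)^4] = 3κ ‖A^T q‖₄⁴ + 3(1 + q^T Σ_N q)². -/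
open Matrix MeasureTheory ProbabilityTheory

open Real Filter
open scoped NNReal ENNReal


lemma aux_integrable_pow_mul_exp {b : ℝ} (hb : 0 < b) (n : ℕ) :
    Integrable (fun x : ℝ => x ^ n * Real.exp (-b * x ^ 2)) := by
  have h := integrable_rpow_mul_exp_neg_mul_sq hb (s := n)
    ((by norm_num : (-1:ℝ) < 0).trans_le (Nat.cast_nonneg n))
  simpa [Real.rpow_natCast] using h

lemma aux_gauss_odd {b : ℝ} {n : ℕ} (hn : Odd n) :
    ∫ x : ℝ, x ^ n * Real.exp (-b * x ^ 2) = 0 := by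
  have h := integral_neg_eq_self (fun x : ℝ => x ^ n * Real.exp (-b * x ^ 2)) volume
  simp only [hn.neg_pow, neg_sq, neg_mul] at h
  rw [integral_neg] at h
  simp only [neg_mul]
  linarith

lemma aux_gauss_step {b : ℝ} (hb : 0 < b) (n : ℕ) :
    ∫ x : ℝ, x ^ (n + 2) * Real.exp (-b * x ^ 2)
      = ((n + 1 : ℝ) / (2 * b)) * ∫ x : ℝ, x ^ n * Real.exp (-b * x ^ 2) := by
  have hu : ∀ x : ℝ, HasDerivAt (fun y : ℝ => y ^ (n + 1))
      (((n : ℝ) + 1) * x ^ n) x := by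
    intro x
    simpa using hasDerivAt_pow (n + 1) x
  have hv : ∀ x : ℝ, HasDerivAt (fun y : ℝ => -(2 * b)⁻¹ * Real.exp (-b * y ^ 2))
      (x * Real.exp (-b * x ^ 2)) x := by
    intro x
    have h1 : HasDerivAt (fun y : ℝ => -b * y ^ 2) (-b * (2 * x)) x := by
      simpa using ((hasDerivAt_pow 2 x).const_mul (-b))
    have h2 := (h1.exp).const_mul (-(2 * b)⁻¹)
    refine h2.congr_deriv ?_
    have h3 : (2 * b)⁻¹ * (2 * b) = 1 := inv_mul_cancel₀ (by positivity)
    linear_combination (x * Real.exp (-b * x ^ 2)) * h3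
  have h := integral_mul_deriv_eq_deriv_mul_of_integrable
    (u := fun x : ℝ => x ^ (n + 1)) (u' := fun x => ((n : ℝ) + 1) * x ^ n)
    (v := fun x : ℝ => -(2 * b)⁻¹ * Real.exp (-b * x ^ 2))
    (v' := fun x => x * Real.exp (-b * x ^ 2)) (fun x _ => hu x) (fun x _ => hv x) ?_ ?_ ?_
  · have e1 : ∫ x : ℝ, x ^ (n + 1) * (x * Real.exp (-b * x ^ 2))
        = ∫ x : ℝ, x ^ (n + 2) * Real.exp (-b * x ^ 2) := by
      congr 1; ext x; ring
    have e2 : ∫ x : ℝ, ((n : ℝ) + 1) * x ^ n * (-(2 * b)⁻¹ * Real.exp (-b * x ^ 2))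
        = -(((n : ℝ) + 1) / (2 * b)) * ∫ x : ℝ, x ^ n * Real.exp (-b * x ^ 2) := by
      rw [← integral_const_mul]
      congr 1; ext x; field_simp
    have h' : ∫ x : ℝ, x ^ (n+1) * (x * Real.exp (-b * x^2))
        = -∫ x : ℝ, ((n:ℝ)+1) * x ^ n * (-(2*b)⁻¹ * Real.exp (-b * x^2)) := h
    rw [e1, e2] at h'
    rw [h']; ring
  · refine ((aux_integrable_pow_mul_exp hb (n + 2)).congr ?_)
    filter_upwards with x
    show x ^ (n+2) * Real.exp (-b * x^2) = x ^ (n+1) * (x * Real.exp (-b * x^2))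
    ring
  · refine (((aux_integrable_pow_mul_exp hb n).const_mul (((n:ℝ)+1) * -(2*b)⁻¹)).congr ?_)
    filter_upwards with x
    show ((n:ℝ)+1) * -(2*b)⁻¹ * (x ^ n * Real.exp (-b * x^2))
        = ((n:ℝ)+1) * x ^ n * (-(2*b)⁻¹ * Real.exp (-b * x^2))
    ring
  · refine (((aux_integrable_pow_mul_exp hb (n+1)).const_mul (-(2*b)⁻¹)).congr ?_)
    filter_upwards with x
    show -(2*b)⁻¹ * (x ^ (n+1) * Real.exp (-b * x^2))
        = x ^ (n+1) * (-(2*b)⁻¹ * Real.exp (-b * x^2))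
    ring

lemma aux_gaussianPDFReal_eq (v : ℝ≥0) (x : ℝ) :
    gaussianPDFReal 0 v x
      = (Real.sqrt (2 * π * v))⁻¹ * Real.exp (-(2 * (v:ℝ))⁻¹ * x ^ 2) := by
  rw [gaussianPDFReal]
  congr 1
  rw [sub_zero, div_eq_mul_inv]
  ring

lemma aux_integral_gaussianReal {v : ℝ≥0} (hv : v ≠ 0) (g : ℝ → ℝ) :
    ∫ x, g x ∂(gaussianReal 0 v) = ∫ x, gaussianPDFReal 0 v x * g x := by
  rw [gaussianReal_of_var_ne_zero _ hv]
  have h : gaussianPDF 0 v = fun x => ((Real.toNNReal (gaussianPDFReal 0 v x) : ℝ≥0) : ℝ≥0∞) :=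
    rfl
  rw [h, integral_withDensity_eq_integral_smul (measurable_gaussianPDFReal 0 v).real_toNNReal g]
  congr 1
  ext x
  rw [NNReal.smul_def, smul_eq_mul, Real.coe_toNNReal _ (gaussianPDFReal_nonneg 0 v x)]

lemma aux_integrable_gaussianReal {v : ℝ≥0} (hv : v ≠ 0) {g : ℝ → ℝ}
    (h : Integrable (fun x => gaussianPDFReal 0 v x * g x) volume) :
    Integrable g (gaussianReal 0 v) := by
  rw [gaussianReal_of_var_ne_zero _ hv]
  have heq : gaussianPDF 0 v = fun x => ((Real.toNNReal (gaussianPDFReal 0 v x) : ℝ≥0) : ℝ≥0∞) :=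
    rfl
  rw [heq, integrable_withDensity_iff_integrable_coe_smul
    (measurable_gaussianPDFReal 0 v).real_toNNReal (g := g)]
  refine h.congr ?_
  filter_upwards with x
  rw [smul_eq_mul, Real.coe_toNNReal _ (gaussianPDFReal_nonneg 0 v x)]

lemma aux_vpos {v : ℝ≥0} (hv : v ≠ 0) : (0:ℝ) < (2 * (v:ℝ))⁻¹ := by
  have : (0:ℝ) < v := lt_of_le_of_ne v.coe_nonneg (by exact_mod_cast (Ne.symm hv))
  positivity

lemma aux_integrable_pow_gaussianReal (v : ℝ≥0) (n : ℕ) :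
    Integrable (fun x => x ^ n) (gaussianReal 0 v) := by
  by_cases hv : v = 0
  · subst hv
    rw [gaussianReal_zero_var]
    refine ⟨(measurable_id.pow_const n).aestronglyMeasurable, ?_⟩
    show (∫⁻ x, (‖x ^ n‖₊ : ℝ≥0∞) ∂Measure.dirac (0:ℝ)) < ⊤
    rw [lintegral_dirac]
    exact ENNReal.coe_lt_top
  · refine aux_integrable_gaussianReal hv ?_
    refine ((aux_integrable_pow_mul_exp (aux_vpos hv) n).const_mul
      (Real.sqrt (2 * π * v))⁻¹).congr ?_
    filter_upwards with x
    rw [aux_gaussianPDFReal_eq]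
    ring

lemma aux_integral_pow_gaussianReal {v : ℝ≥0} (hv : v ≠ 0) (n : ℕ) :
    ∫ x, x ^ n ∂(gaussianReal 0 v)
      = (Real.sqrt (2 * π * v))⁻¹ * ∫ x, x ^ n * Real.exp (-(2 * (v:ℝ))⁻¹ * x ^ 2) := by
  rw [aux_integral_gaussianReal hv, ← integral_const_mul]
  congr 1
  ext x
  rw [aux_gaussianPDFReal_eq]
  ring

lemma aux_gauss_norm {v : ℝ≥0} (hv : v ≠ 0) :
    (Real.sqrt (2 * π * v))⁻¹ * ∫ x : ℝ, Real.exp (-(2 * (v:ℝ))⁻¹ * x ^ 2) = 1 := by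
  have h := integral_gaussianPDFReal_eq_one 0 hv
  rw [← h, ← integral_const_mul]
  congr 1
  ext x
  rw [aux_gaussianPDFReal_eq]

lemma aux_gm1 (v : ℝ≥0) : ∫ x, x ∂(gaussianReal 0 v) = 0 := by
  by_cases hv : v = 0
  · subst hv; rw [gaussianReal_zero_var, integral_dirac]
  · have h := aux_integral_pow_gaussianReal hv 1
    rw [aux_gauss_odd (⟨0, by norm_num⟩ : Odd 1), mul_zero] at h
    simp only [pow_one] at h
    exact h

lemma aux_gm3 (v : ℝ≥0) : ∫ x, x ^ 3 ∂(gaussianReal 0 v) = 0 := by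
  by_cases hv : v = 0
  · subst hv; rw [gaussianReal_zero_var, integral_dirac]; norm_num
  · rw [aux_integral_pow_gaussianReal hv 3, aux_gauss_odd (⟨1, by norm_num⟩ : Odd 3), mul_zero]

lemma aux_gm2 (v : ℝ≥0) : ∫ x, x ^ 2 ∂(gaussianReal 0 v) = (v:ℝ) := by
  by_cases hv : v = 0
  · subst hv; rw [gaussianReal_zero_var, integral_dirac]; norm_num
  · have hb := aux_vpos hv
    have hvpos : (0:ℝ) < v := lt_of_le_of_ne v.coe_nonneg (by exact_mod_cast (Ne.symm hv))
    rw [aux_integral_pow_gaussianReal hv 2]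
    have hstep := aux_gauss_step hb 0
    simp only [pow_zero, one_mul, Nat.cast_zero, zero_add] at hstep
    rw [hstep]
    have hn := aux_gauss_norm hv
    have : (Real.sqrt (2 * π * v))⁻¹ *
        (1 / (2 * (2 * (v:ℝ))⁻¹) * ∫ x : ℝ, Real.exp (-(2 * (v:ℝ))⁻¹ * x ^ 2))
        = 1 / (2 * (2 * (v:ℝ))⁻¹) *
          ((Real.sqrt (2 * π * v))⁻¹ * ∫ x : ℝ, Real.exp (-(2 * (v:ℝ))⁻¹ * x ^ 2)) := by
      ring
    rw [this, hn, mul_one]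
    field_simp

lemma aux_gm4 (v : ℝ≥0) : ∫ x, x ^ 4 ∂(gaussianReal 0 v) = 3 * (v:ℝ) ^ 2 := by
  by_cases hv : v = 0
  · subst hv; rw [gaussianReal_zero_var, integral_dirac]; norm_num
  · have hb := aux_vpos hv
    have hvpos : (0:ℝ) < v := lt_of_le_of_ne v.coe_nonneg (by exact_mod_cast (Ne.symm hv))
    rw [aux_integral_pow_gaussianReal hv 4]
    have hstep2 := aux_gauss_step hb 2
    rw [show (2:ℕ) + 2 = 4 from rfl] at hstep2
    have hstep0 := aux_gauss_step hb 0
    simp only [pow_zero, one_mul, Nat.cast_zero, zero_add] at hstep0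
    rw [hstep2, hstep0]
    have hn := aux_gauss_norm hv
    have : (Real.sqrt (2 * π * v))⁻¹ *
        (((2:ℕ) + 1) / (2 * (2 * (v:ℝ))⁻¹) * (1 / (2 * (2 * (v:ℝ))⁻¹) *
          ∫ x : ℝ, Real.exp (-(2 * (v:ℝ))⁻¹ * x ^ 2)))
        = ((2:ℕ) + 1) / (2 * (2 * (v:ℝ))⁻¹) * (1 / (2 * (2 * (v:ℝ))⁻¹)) *
          ((Real.sqrt (2 * π * v))⁻¹ * ∫ x : ℝ, Real.exp (-(2 * (v:ℝ))⁻¹ * x ^ 2)) := by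
      ring
    rw [this, hn, mul_one]
    field_simp
    ring


section Prob
variable {Ω : Type*} [MeasurableSpace Ω] {μ : Measure Ω}

lemma aux_pow_integrable [IsFiniteMeasure μ] {f : Ω → ℝ} (hf : MemLp f 4 μ) {i : ℕ}
    (hi : i ≤ 4) : Integrable (fun ω => f ω ^ i) μ := by
  rcases Nat.eq_zero_or_pos i with h0 | hpos
  · subst h0
    simp only [pow_zero]
    exact integrable_const 1
  · have hle : (i : ℝ≥0∞) ≤ 4 := by exact_mod_cast hi
    have hfi : MemLp f i μ := hf.mono_exponent hle
    have h := hfi.integrable_norm_rpow (by exact_mod_cast hpos.ne' : (i : ℝ≥0∞) ≠ 0)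
      (by simp : (i : ℝ≥0∞) ≠ ∞)
    refine h.mono' ((hf.1.aemeasurable.pow_const i).aestronglyMeasurable) ?_
    filter_upwards with ω
    have hcast : ((i : ℝ≥0∞)).toReal = (i : ℝ) := by simp
    rw [hcast, Real.rpow_natCast]
    exact le_of_eq (norm_pow _ i)

lemma aux_step [IsProbabilityMeasure μ] {X Y : Ω → ℝ} (hXY : IndepFun X Y μ)
    (hXi : ∀ i, i ≤ 4 → Integrable (fun ω => X ω ^ i) μ)
    (hYi : ∀ i, i ≤ 4 → Integrable (fun ω => Y ω ^ i) μ)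
    (hXm : ∫ ω, X ω ∂μ = 0) (hYm : ∫ ω, Y ω ∂μ = 0) :
    (∫ ω, (X ω + Y ω) ^ 2 ∂μ = ∫ ω, X ω ^ 2 ∂μ + ∫ ω, Y ω ^ 2 ∂μ) ∧
    (∫ ω, (X ω + Y ω) ^ 4 ∂μ
      = ∫ ω, X ω ^ 4 ∂μ + 6 * (∫ ω, X ω ^ 2 ∂μ) * (∫ ω, Y ω ^ 2 ∂μ)
        + ∫ ω, Y ω ^ 4 ∂μ) := by
  have hind : ∀ i j : ℕ, IndepFun (fun ω => X ω ^ i) (fun ω => Y ω ^ j) μ :=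
    fun i j => hXY.comp (measurable_id.pow_const i) (measurable_id.pow_const j)
  have hprod : ∀ i j : ℕ, i ≤ 4 → j ≤ 4 →
      Integrable (fun ω => X ω ^ i * Y ω ^ j) μ :=
    fun i j hi hj => (hind i j).integrable_mul (hXi i hi) (hYi j hj)
  have hmul : ∀ i j : ℕ, i ≤ 4 → j ≤ 4 →
      ∫ ω, X ω ^ i * Y ω ^ j ∂μ = (∫ ω, X ω ^ i ∂μ) * ∫ ω, Y ω ^ j ∂μ :=
    fun i j hi hj => (hind i j).integral_fun_mul_eq_mul_integral (hXi i hi).1 (hYi j hj).1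
  have hX1 : ∫ ω, X ω ^ 1 ∂μ = 0 := by simpa using hXm
  have hY1 : ∫ ω, Y ω ^ 1 ∂μ = 0 := by simpa using hYm
  constructor
  · calc ∫ ω, (X ω + Y ω) ^ 2 ∂μ
        = ∫ ω, (X ω ^ 2 + (2 * (X ω ^ 1 * Y ω ^ 1) + Y ω ^ 2)) ∂μ :=
          integral_congr_ae (Filter.Eventually.of_forall fun ω => by ring)
      _ = ∫ ω, X ω ^ 2 ∂μ + ∫ ω, (2 * (X ω ^ 1 * Y ω ^ 1) + Y ω ^ 2) ∂μ :=
          integral_add (hXi 2 (by norm_num))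
            (((hprod 1 1 (by norm_num) (by norm_num)).const_mul 2).add (hYi 2 (by norm_num)))
      _ = ∫ ω, X ω ^ 2 ∂μ + (∫ ω, 2 * (X ω ^ 1 * Y ω ^ 1) ∂μ + ∫ ω, Y ω ^ 2 ∂μ) := by
          rw [integral_add ((hprod 1 1 (by norm_num) (by norm_num)).const_mul 2)
            (hYi 2 (by norm_num))]
      _ = ∫ ω, X ω ^ 2 ∂μ + ∫ ω, Y ω ^ 2 ∂μ := by
          rw [integral_const_mul, hmul 1 1 (by norm_num) (by norm_num), hX1]
          ring
  · calc ∫ ω, (X ω + Y ω) ^ 4 ∂μ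
        = ∫ ω, (X ω ^ 4 + (4 * (X ω ^ 3 * Y ω ^ 1) + (6 * (X ω ^ 2 * Y ω ^ 2)
            + (4 * (X ω ^ 1 * Y ω ^ 3) + Y ω ^ 4)))) ∂μ :=
          integral_congr_ae (Filter.Eventually.of_forall fun ω => by ring)
      _ = ∫ ω, X ω ^ 4 ∂μ + (∫ ω, 4 * (X ω ^ 3 * Y ω ^ 1) ∂μ
            + (∫ ω, 6 * (X ω ^ 2 * Y ω ^ 2) ∂μ
              + (∫ ω, 4 * (X ω ^ 1 * Y ω ^ 3) ∂μ + ∫ ω, Y ω ^ 4 ∂μ))) := by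
          have I3 : Integrable
              (fun ω => 4 * (X ω ^ 1 * Y ω ^ 3) + Y ω ^ 4) μ :=
            ((hprod 1 3 (by norm_num) (by norm_num)).const_mul 4).add
              (hYi 4 (by norm_num))
          have I2 : Integrable
              (fun ω => 6 * (X ω ^ 2 * Y ω ^ 2)
                + (4 * (X ω ^ 1 * Y ω ^ 3) + Y ω ^ 4)) μ :=
            ((hprod 2 2 (by norm_num) (by norm_num)).const_mul 6).add I3
          have I1 : Integrable
              (fun ω => 4 * (X ω ^ 3 * Y ω ^ 1)
                + (6 * (X ω ^ 2 * Y ω ^ 2) + (4 * (X ω ^ 1 * Y ω ^ 3) + Y ω ^ 4))) μ :=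
            ((hprod 3 1 (by norm_num) (by norm_num)).const_mul 4).add I2
          rw [integral_add (hXi 4 (by norm_num)) I1,
            integral_add ((hprod 3 1 (by norm_num) (by norm_num)).const_mul 4) I2,
            integral_add ((hprod 2 2 (by norm_num) (by norm_num)).const_mul 6) I3,
            integral_add ((hprod 1 3 (by norm_num) (by norm_num)).const_mul 4)
              (hYi 4 (by norm_num))]
      _ = ∫ ω, X ω ^ 4 ∂μ + 6 * (∫ ω, X ω ^ 2 ∂μ) * (∫ ω, Y ω ^ 2 ∂μ)
            + ∫ ω, Y ω ^ 4 ∂μ := by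
          rw [integral_const_mul, integral_const_mul, integral_const_mul,
            hmul 3 1 (by norm_num) (by norm_num), hmul 2 2 (by norm_num) (by norm_num),
            hmul 1 3 (by norm_num) (by norm_num), hX1, hY1]
          ring

lemma aux_sum_moments [IsProbabilityMeasure μ] {ι : Type*} [DecidableEq ι] (X : ι → Ω → ℝ)
    (hmeas : ∀ i, Measurable (X i))
    (hindep : iIndepFun X μ)
    (hL4 : ∀ i, MemLp (X i) 4 μ)
    (h1 : ∀ i, ∫ ω, X i ω ∂μ = 0) (s : Finset ι) :
    MemLp (fun ω => ∑ i ∈ s, X i ω) 4 μ ∧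
    ∫ ω, (∑ i ∈ s, X i ω) ∂μ = 0 ∧
    ∫ ω, (∑ i ∈ s, X i ω) ^ 2 ∂μ = ∑ i ∈ s, ∫ ω, X i ω ^ 2 ∂μ ∧
    ∫ ω, (∑ i ∈ s, X i ω) ^ 4 ∂μ
      = ∑ i ∈ s, ∫ ω, X i ω ^ 4 ∂μ
        + 3 * ((∑ i ∈ s, ∫ ω, X i ω ^ 2 ∂μ) ^ 2
          - ∑ i ∈ s, (∫ ω, X i ω ^ 2 ∂μ) ^ 2) := by
  induction s using Finset.induction_on with
  | empty =>
    refine ⟨by simpa using memLp_const (0:ℝ), by simp, by simp, by simp⟩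
  | @insert a s ha ih =>
    obtain ⟨ihL, ih1, ih2, ih4⟩ := ih
    have hind : IndepFun (X a) (fun ω => ∑ i ∈ s, X i ω) μ := by
      have h' := (hindep.indepFun_finsetSum_of_notMem hmeas ha).symm
      have heq : (∑ i ∈ s, X i) = fun ω => ∑ i ∈ s, X i ω := by
        funext ω
        simp [Finset.sum_apply]
      rwa [heq] at h'
    have hstep := aux_step hind (fun i hi => aux_pow_integrable (hL4 a) hi)
      (fun i hi => aux_pow_integrable ihL hi) (h1 a) ih1
    have hfun : (fun ω => ∑ i ∈ insert a s, X i ω)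
        = fun ω => X a ω + ∑ i ∈ s, X i ω := by
      funext ω
      rw [Finset.sum_insert ha]
    refine ⟨?_, ?_, ?_, ?_⟩
    · rw [hfun]
      exact (hL4 a).add ihL
    · rw [show (∫ ω, (∑ i ∈ insert a s, X i ω) ∂μ)
          = ∫ ω, (X a ω + ∑ i ∈ s, X i ω) ∂μ from integral_congr_ae
            (Filter.Eventually.of_forall fun ω => by simp [Finset.sum_insert ha])]
      rw [integral_add ((hL4 a).integrable (by norm_num)) (ihL.integrable (by norm_num)),
        h1 a, ih1]
      ring
    · rw [show (∫ ω, (∑ i ∈ insert a s, X i ω) ^ 2 ∂μ)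
          = ∫ ω, (X a ω + ∑ i ∈ s, X i ω) ^ 2 ∂μ from integral_congr_ae
            (Filter.Eventually.of_forall fun ω => by simp [Finset.sum_insert ha])]
      rw [hstep.1, ih2, Finset.sum_insert ha]
    · rw [show (∫ ω, (∑ i ∈ insert a s, X i ω) ^ 4 ∂μ)
          = ∫ ω, (X a ω + ∑ i ∈ s, X i ω) ^ 4 ∂μ from integral_congr_ae
            (Filter.Eventually.of_forall fun ω => by simp [Finset.sum_insert ha])]
      rw [hstep.2, ih4, ih2, Finset.sum_insert ha, Finset.sum_insert ha,
        Finset.sum_insert ha]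
      ring

end Prob


/-- Fourth moment of a projection: with `Y = AZ + N`, `Z` having independent
entries with mean zero, unit variance and fourth moment `3(κ+1)`, `A`
orthogonal, and `N ~ N(0, Σ_N)` independent of `Z`, one has for any unit `q`:
`E[(qᵀY)⁴] = 3κ‖Aᵀq‖₄⁴ + 3(1 + qᵀΣ_N q)²`. -/
theorem stmt_8 {r : ℕ} {Ω : Type*} [MeasurableSpace Ω] (μ : Measure Ω)
    [IsProbabilityMeasure μ] (κ : ℝ) (Z : Fin r → Ω → ℝ) (N : Ω → Fin r → ℝ)
    (hZmeas : ∀ j, Measurable (Z j)) (hNmeas : Measurable N)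
    (hindep : iIndepFun Z μ)
    (hZN : IndepFun (fun ω => fun j => Z j ω) N μ)
    (hL4 : ∀ j, MemLp (Z j) 4 μ)
    (hmean : ∀ j, ∫ ω, Z j ω ∂μ = 0)
    (hvar : ∀ j, ∫ ω, Z j ω ^ 2 ∂μ = 1)
    (hfour : ∀ j, ∫ ω, Z j ω ^ 4 ∂μ = 3 * (κ + 1))
    (A : Matrix (Fin r) (Fin r) ℝ) (hA : Aᵀ * A = 1) (hA' : A * Aᵀ = 1)
    (SigN : Matrix (Fin r) (Fin r) ℝ) (hSig : SigN.PosSemidef)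
    (hGauss : ∀ u : Fin r → ℝ,
      Measure.map (fun ω => u ⬝ᵥ N ω) μ
        = gaussianReal 0 (u ⬝ᵥ SigN.mulVec u).toNNReal)
    (q : Fin r → ℝ) (hq : q ⬝ᵥ q = 1) :
    ∫ ω, (q ⬝ᵥ ((A.mulVec fun j => Z j ω) + N ω)) ^ 4 ∂μ
      = 3 * κ * ∑ j, (Aᵀ.mulVec q) j ^ 4 + 3 * (1 + q ⬝ᵥ SigN.mulVec q) ^ 2 := by

  classical
  set v : Fin r → ℝ := Aᵀ.mulVec q with hv
  have hdot : ∀ z : Fin r → ℝ, q ⬝ᵥ A.mulVec z = v ⬝ᵥ z := by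
    intro z
    rw [Matrix.dotProduct_mulVec, hv, Matrix.mulVec_transpose]
  have hvv : v ⬝ᵥ v = 1 := by
    have h1 : A.mulVec v = q := by
      rw [hv, Matrix.mulVec_mulVec, hA', Matrix.one_mulVec]
    calc v ⬝ᵥ v = q ⬝ᵥ A.mulVec v := (hdot v).symm
      _ = q ⬝ᵥ q := by rw [h1]
      _ = 1 := hq
  have hv2sum : ∑ j, v j ^ 2 = 1 := by
    rw [← hvv]
    exact Finset.sum_congr rfl fun j _ => sq (v j)
  set X : Fin r → Ω → ℝ := fun j ω => v j * Z j ω with hX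
  have hXmeas : ∀ j, Measurable (X j) := fun j => (hZmeas j).const_mul (v j)
  have hXindep : iIndepFun X μ :=
    hindep.comp (fun j (x : ℝ) => v j * x) (fun j => measurable_const_mul (v j))
  have hXL4 : ∀ j, MemLp (X j) 4 μ := fun j => (hL4 j).const_mul (v j)
  have hX1 : ∀ j, ∫ ω, X j ω ∂μ = 0 := fun j => by
    simp only [hX]
    rw [integral_const_mul, hmean j, mul_zero]
  have hX2 : ∀ j, ∫ ω, X j ω ^ 2 ∂μ = v j ^ 2 := fun j => by
    simp only [hX, mul_pow]
    rw [integral_const_mul, hvar j, mul_one]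
  have hX4 : ∀ j, ∫ ω, X j ω ^ 4 ∂μ = 3 * (κ + 1) * v j ^ 4 := fun j => by
    simp only [hX, mul_pow]
    rw [integral_const_mul, hfour j]
    ring
  obtain ⟨hSL4, hS1, hS2, hS4⟩ :=
    aux_sum_moments X hXmeas hXindep hXL4 hX1 Finset.univ
  have hsum2 : ∑ j, ∫ ω, X j ω ^ 2 ∂μ = 1 := by
    rw [Finset.sum_congr rfl fun j _ => hX2 j]
    exact hv2sum
  have hsum2sq : ∑ j, (∫ ω, X j ω ^ 2 ∂μ) ^ 2 = ∑ j, v j ^ 4 :=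
    Finset.sum_congr rfl fun j _ => by rw [hX2 j]; ring
  have hsum4 : ∑ j, ∫ ω, X j ω ^ 4 ∂μ = 3 * (κ + 1) * ∑ j, v j ^ 4 := by
    rw [Finset.mul_sum]
    exact Finset.sum_congr rfl fun j _ => hX4 j
  have hS2' : ∫ ω, (∑ j, X j ω) ^ 2 ∂μ = 1 := by rw [hS2, hsum2]
  have hS4' : ∫ ω, (∑ j, X j ω) ^ 4 ∂μ
      = 3 * (κ + 1) * ∑ j, v j ^ 4 + 3 * (1 - ∑ j, v j ^ 4) := by
    rw [hS4, hsum4, hsum2, hsum2sq, one_pow]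
  -- the Gaussian part
  set W : Ω → ℝ := fun ω => q ⬝ᵥ N ω with hW
  have hWmeas : Measurable W := by
    show Measurable fun ω => ∑ i, q i * N ω i
    exact Finset.measurable_sum _ fun i _ =>
      ((measurable_pi_apply i).comp hNmeas).const_mul (q i)
  set σ2 : ℝ := q ⬝ᵥ SigN.mulVec q with hσ2
  have hσnn : 0 ≤ σ2 := by simpa using (posSemidef_iff_dotProduct_mulVec.mp hSig).2 q
  have hvnnc : ((σ2.toNNReal : ℝ≥0) : ℝ) = σ2 := Real.coe_toNNReal _ hσnn
  have hmap : Measure.map W μ = gaussianReal 0 σ2.toNNReal := hGauss q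
  have hWint : ∀ n : ℕ, Integrable (fun ω => W ω ^ n) μ := by
    intro n
    have h := aux_integrable_pow_gaussianReal σ2.toNNReal n
    rw [← hmap] at h
    exact (integrable_map_measure ((measurable_id.pow_const n).aestronglyMeasurable)
      hWmeas.aemeasurable).mp h
  have hWmom : ∀ n : ℕ, ∫ ω, W ω ^ n ∂μ = ∫ x, x ^ n ∂(gaussianReal 0 σ2.toNNReal) := by
    intro n
    rw [← hmap]
    exact (integral_map (f := fun x => x ^ n) hWmeas.aemeasurable
      ((measurable_id.pow_const n).aestronglyMeasurable)).symm
  have hW1 : ∫ ω, W ω ∂μ = 0 := by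
    have h := hWmom 1
    simp only [pow_one] at h
    rw [h]
    exact aux_gm1 _
  have hW2 : ∫ ω, W ω ^ 2 ∂μ = σ2 := by rw [hWmom 2, aux_gm2, hvnnc]
  have hW4 : ∫ ω, W ω ^ 4 ∂μ = 3 * σ2 ^ 2 := by rw [hWmom 4, aux_gm4, hvnnc]
  have hφmeas : Measurable fun z : Fin r → ℝ => ∑ j, v j * z j :=
    Finset.measurable_sum _ fun j _ => by fun_prop
  have hψmeas : Measurable fun y : Fin r → ℝ => q ⬝ᵥ y :=
    Finset.measurable_sum _ fun i _ => by fun_prop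
  have hSW : IndepFun (fun ω => ∑ j, X j ω) W μ := hZN.comp hφmeas hψmeas
  have hfinal := (aux_step hSW (fun i hi => aux_pow_integrable hSL4 hi)
    (fun i _ => hWint i) hS1 hW1).2
  calc ∫ ω, (q ⬝ᵥ ((A.mulVec fun j => Z j ω) + N ω)) ^ 4 ∂μ
      = ∫ ω, ((∑ j, X j ω) + W ω) ^ 4 ∂μ :=
        integral_congr_ae (Filter.Eventually.of_forall fun ω => by
          simp only [add_dotProduct, dotProduct_add, hdot]
          rfl)
    _ = ∫ ω, (∑ j, X j ω) ^ 4 ∂μ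
          + 6 * (∫ ω, (∑ j, X j ω) ^ 2 ∂μ) * (∫ ω, W ω ^ 2 ∂μ)
          + ∫ ω, W ω ^ 4 ∂μ := hfinal
    _ = 3 * κ * ∑ j, v j ^ 4 + 3 * (1 + σ2) ^ 2 := by
        rw [hS4', hS2', hW2, hW4]
        ring
end
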